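/- arXiv:1607.01566 — 3 statements merged into one kernel-verified Lean document; each statement's English description precedes it below -/
import Mathlib

section
/- For every nonzero complex number t, every complex number z and every integer n ≥ 1: ∑_{k∈ℤ} t^{kn} I_{kn}(z) = (1/n) ∑_{j=0}^{n−1} exp( (z/2)( t^{−1} e^{2πij/n} + t e^{−2πij/n} ) ). -/
open Real Filter MeasureTheory

/-- Modified Bessel function of the first kind of integer order `m` and complex argument,
`I_m(z) = ∑_{j=0}^∞ (z/2)^{2j+|m|} / (j! (j+|m|)!)`. -/
noncomputable def besselIC (m : ℤ) (z : ℂ) : ℂ :=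
  ∑' j : ℕ, (z / 2) ^ (2 * j + m.natAbs) /
    ((Nat.factorial j : ℂ) * (Nat.factorial (j + m.natAbs) : ℂ))

/-!
Writing `exp((z/2)(s + s⁻¹)) = exp(zs/2) · exp(z/(2s))` as a product of two exponential series
and grouping the terms `(p, q)` by the power `k = p - q` of `s` gives the generating function
`∑ₖ sᵏ Iₖ(z)`. Substituting `s = t ζʲ` with `ζ = e^{-2πi/n}` and summing over `j < n`, the
root-of-unity filter `∑ⱼ ζ^{jk} = n · [n ∣ k]` keeps exactly the terms with `n ∣ k`.
-/

open Finset Nat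

lemma zpow_pow_comm {α : Type*} [DivisionMonoid α] (a : α) (k : ℤ) (j : ℕ) :
    (a ^ k) ^ j = (a ^ j) ^ k := by
  rw [← zpow_natCast, ← zpow_natCast a j, ← zpow_mul, ← zpow_mul, mul_comm]

def natPairEquivIntNat : ℕ × ℕ ≃ ℤ × ℕ where
  toFun pq := ((pq.1 : ℤ) - pq.2, min pq.1 pq.2)
  invFun kj := (kj.2 + kj.1.toNat, kj.2 + (-kj.1).toNat)
  left_inv pq := by ext <;> simp <;> omega
  right_inv kj := by ext <;> simp; omega

lemma pow_div_factorial_mul_inv_pow_div_factorial (a : ℂ) {s : ℂ} (hs : s ≠ 0) (k : ℤ) (j : ℕ) :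
    (a * s) ^ (j + k.toNat) / (j + k.toNat)! * ((a * s⁻¹) ^ (j + (-k).toNat) / (j + (-k).toNat)!) =
      s ^ k * (a ^ (2 * j + k.natAbs) / (j ! * (j + k.natAbs)!)) := by
  obtain ⟨m, rfl | rfl⟩ := Int.eq_nat_or_neg k
  · simp only [Int.toNat_natCast, Int.toNat_neg_natCast, Int.natAbs_natCast, zpow_natCast,
      add_zero, mul_pow, inv_pow]
    field_simp
    ring
  · simp only [Int.toNat_natCast, Int.toNat_neg_natCast, Int.natAbs_neg, Int.natAbs_natCast,
      neg_neg, zpow_neg, zpow_natCast, add_zero, mul_pow, inv_pow]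
    field_simp
    ring

theorem hasSum_zpow_mul_besselIC (z : ℂ) {s : ℂ} (hs : s ≠ 0) :
    HasSum (fun k : ℤ => s ^ k * besselIC k z) (Complex.exp (z / 2 * (s + s⁻¹))) := by
  have hexp (w : ℂ) : HasSum (fun p => w ^ p / (p ! : ℂ)) (Complex.exp w) := by
    rw [Complex.exp_eq_exp_ℂ]
    exact NormedSpace.expSeries_div_hasSum_exp w
  have hnorm (w : ℂ) : Summable (fun p => ‖w ^ p / (p ! : ℂ)‖) := by
    simpa [norm_pow] using Real.summable_pow_div_factorial ‖w‖
  have habs := summable_mul_of_summable_norm (hnorm (z / 2 * s)) (hnorm (z / 2 * s⁻¹))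
  have hprod := (hexp (z / 2 * s)).mul (hexp (z / 2 * s⁻¹)) habs
  rw [← Complex.exp_add, ← mul_add, ← natPairEquivIntNat.symm.hasSum_iff] at hprod
  simp only [Function.comp_def, natPairEquivIntNat, Equiv.coe_fn_symm_mk,
    pow_div_factorial_mul_inv_pow_div_factorial _ hs] at hprod
  refine hprod.prod_fiberwise fun k => ?_
  have hbessel := (summable_mul_left_iff (zpow_ne_zero k hs)).1 (hprod.summable.prod_factor k)
  exact hbessel.hasSum.mul_left (s ^ k)

theorem IsPrimitiveRoot.sum_pow_zpow {K : Type*} [Field K] {ζ : K} {n : ℕ}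
    (hζ : IsPrimitiveRoot ζ n) (k : ℤ) :
    ∑ j ∈ range n, (ζ ^ k) ^ j = if (n : ℤ) ∣ k then (n : K) else 0 := by
  split_ifs with hk
  · simp [(hζ.zpow_eq_one_iff_dvd k).2 hk]
  · rw [geom_sum_eq (mt (hζ.zpow_eq_one_iff_dvd k).1 hk), zpow_pow_comm, hζ.pow_eq_one,
      one_zpow, sub_self, zero_div]

theorem hasSum_comp_mul_right_iff_ite_dvd {α : Type*} [AddCommMonoid α] [TopologicalSpace α]
    {n : ℤ} (hn : n ≠ 0) (f : ℤ → α) {a : α} :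
    HasSum (fun m => f (m * n)) a ↔ HasSum (fun k => if n ∣ k then f k else 0) a := by
  rw [← (mul_left_injective₀ hn).hasSum_iff (f := fun k => if n ∣ k then f k else 0)]
  · simp [Function.comp_def]
  · rintro k hk
    rw [if_neg]
    rintro ⟨m, rfl⟩
    exact hk ⟨m, mul_comm _ _⟩

/-- `∑_{k∈ℤ} t^{kn} I_{kn}(z) = (1/n) ∑_{j=0}^{n−1} exp((z/2)(t⁻¹ e^{2πij/n} + t e^{−2πij/n}))`. -/
theorem bessel_sum_roots_of_unity
    (t : ℂ) (ht : t ≠ 0) (z : ℂ) (n : ℕ) (hn : 1 ≤ n) :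
    ∑' k : ℤ, t ^ (k * (n : ℤ)) * besselIC (k * (n : ℤ)) z =
      (1 / (n : ℂ)) * ∑ j ∈ Finset.range n,
        Complex.exp ((z / 2) *
          (t⁻¹ * Complex.exp (2 * (π : ℂ) * Complex.I * (j : ℂ) / (n : ℂ))
            + t * Complex.exp (-(2 * (π : ℂ) * Complex.I * (j : ℂ)) / (n : ℂ)))) := by
  have hn0 : n ≠ 0 := by omega
  have hζ : IsPrimitiveRoot (Complex.exp (-(2 * π * Complex.I / n))) n := by
    rw [Complex.exp_neg]
    exact (Complex.isPrimitiveRoot_exp n hn0).inv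
  set ζ := Complex.exp (-(2 * π * Complex.I / n))
  have hζpow (j : ℕ) : Complex.exp (-(2 * π * Complex.I * j) / n) = ζ ^ j := by
    rw [← Complex.exp_nat_mul]
    ring_nf
  have hζpow_inv (j : ℕ) : Complex.exp (2 * π * Complex.I * j / n) = (ζ ^ j)⁻¹ := by
    rw [← hζpow, ← Complex.exp_neg]
    ring_nf
  have hterm (j : ℕ) : HasSum (fun k : ℤ => (ζ ^ k) ^ j * (t ^ k * besselIC k z))
      (Complex.exp ((z / 2) * (t⁻¹ * Complex.exp (2 * π * Complex.I * j / n)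
        + t * Complex.exp (-(2 * π * Complex.I * j) / n)))) := by
    rw [hζpow, hζpow_inv]
    convert hasSum_zpow_mul_besselIC z (mul_ne_zero ht (pow_ne_zero j (hζ.ne_zero hn0)))
      using 2 with k
    · rw [mul_zpow, zpow_pow_comm]
      ring
    · rw [mul_inv]
      ring
  have hsum := hasSum_sum fun j (_ : j ∈ range n) => hterm j
  simp only [← Finset.sum_mul, hζ.sum_pow_zpow, ite_mul, zero_mul] at hsum
  have hmultiples := (hasSum_comp_mul_right_iff_ite_dvd (by exact_mod_cast hn0) _).2 hsum
  rw [← (hmultiples.mul_left (1 / (n : ℂ))).tsum_eq]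
  congr 1 with k
  field_simp
end

section
/- For every t > 0, the rescaled discrete theta function converges to the continuous one: lim_{n→∞} θ^{G_n}(n² t) = θ^∞(t). -/
/-!
The factor of `θ^{G_n}` belonging to the direction `i` is the theta function of a twisted cycle of
length `a = a_i(n)`. Its summand is `a`-periodic in `j`, so the sum may be taken over the `a`
integers `k` with `k + λ ∈ [-a/2, a/2)`. For fixed `k`, `n sin(π(k + λ)/a) → π(k + Λ)/α`, which is
termwise convergence to the summand of the theta function of the circle `ℝ/αℤ`; on the window,
Jordan's inequality `|sin πy| ≥ 2|y|` bounds the summands by a Gaussian in `k` uniformly in `n`, so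
dominated convergence (Tannery's theorem) applies. Finally the Gaussian sum over `ℤ^d` factors
into the product of the one-dimensional ones.
-/

open Real Filter Topology

lemma Real.sin_eq_mul_sinc (x : ℝ) : sin x = x * sinc x := by
  rcases eq_or_ne x 0 with rfl | hx
  · simp
  · rw [sinc_of_ne_zero hx, mul_div_cancel₀ _ hx]

lemma Filter.Tendsto.mul_sin {ι : Type*} {l : Filter ι} {c x : ι → ℝ} {L : ℝ}
    (hx : Tendsto x l (𝓝 0)) (hcx : Tendsto (fun i => c i * x i) l (𝓝 L)) :
    Tendsto (fun i => c i * sin (x i)) l (𝓝 L) := by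
  have hsinc : Tendsto (fun i => sinc (x i)) l (𝓝 1) :=
    sinc_zero ▸ (continuous_sinc.tendsto 0).comp hx
  simpa [sin_eq_mul_sinc, mul_assoc] using hcx.mul hsinc

lemma four_mul_sq_le_sin_pi_mul_sq {y : ℝ} (hy : |y| ≤ 1 / 2) : 4 * y ^ 2 ≤ sin (π * y) ^ 2 := by
  have hjordan : 2 / π * |π * y| ≤ |sin (π * y)| :=
    mul_abs_le_abs_sin (by rw [abs_mul, abs_of_pos pi_pos]; nlinarith [pi_pos])
  rw [abs_mul, abs_of_pos pi_pos, ← mul_assoc, div_mul_cancel₀ _ pi_ne_zero] at hjordan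
  calc 4 * y ^ 2 = (2 * |y|) ^ 2 := by rw [mul_pow, sq_abs]; norm_num
    _ ≤ |sin (π * y)| ^ 2 := by gcongr
    _ = sin (π * y) ^ 2 := sq_abs _

lemma exp_neg_mul_add_sq_le {c s B : ℝ} (hc : 0 ≤ c) (hs : |s| ≤ B) (x : ℝ) :
    exp (-c * (x + s) ^ 2) ≤ exp (c * B ^ 2) * exp (-(c / 2) * x ^ 2) := by
  rw [← exp_add, exp_le_exp]
  have hsB : s ^ 2 ≤ B ^ 2 := sq_le_sq' (abs_le.1 hs).1 (abs_le.1 hs).2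
  nlinarith [sq_nonneg (x + 2 * s), mul_le_mul_of_nonneg_left hsB hc]

lemma summable_exp_neg_mul_int_sq {c : ℝ} (hc : 0 < c) :
    Summable fun k : ℤ => exp (-c * k ^ 2) := by
  refine (summable_pow_mul_jacobiTheta₂_term_bound 0 (T := c / π) (by positivity) 0).congr
    fun k => ?_
  simp [← mul_assoc, mul_div_cancel₀ _ pi_ne_zero]

lemma summable_exp_neg_mul_int_add_sq {c : ℝ} (hc : 0 < c) (s : ℝ) :
    Summable fun k : ℤ => exp (-c * (k + s) ^ 2) :=
  ((summable_exp_neg_mul_int_sq (half_pos hc)).mul_left _).of_nonneg_of_le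
    (fun _ => (exp_pos _).le) fun k => exp_neg_mul_add_sq_le hc.le le_rfl k

section PiProduct

variable {R β : Type*} [NormedCommRing R] [NormMulClass R]

lemma summable_norm_prod_pi {n : ℕ} {f : Fin n → β → R} (hf : ∀ i, Summable fun k => ‖f i k‖) :
    Summable fun K : Fin n → β => ‖∏ i, f i (K i)‖ := by
  induction n with
  | zero => exact Summable.of_finite
  | succ n ih =>
    rw [← (Fin.consEquiv fun _ => β).summable_iff]
    refine ((hf 0).mul_norm (ih fun i => hf i.succ)).congr fun p => ?_
    simp [Fin.prod_univ_succ, Fin.consEquiv]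

lemma tsum_prod_pi [CompleteSpace R] {n : ℕ} {f : Fin n → β → R}
    (hf : ∀ i, Summable fun k => ‖f i k‖) :
    ∑' K : Fin n → β, ∏ i, f i (K i) = ∏ i, ∑' k, f i k := by
  induction n with
  | zero => simp
  | succ n ih =>
    rw [← (Fin.consEquiv fun _ => β).tsum_eq, Fin.prod_univ_succ, ← ih fun i => hf i.succ,
      tsum_mul_tsum_of_summable_norm (hf 0) (summable_norm_prod_pi fun i => hf i.succ)]
    simp [Fin.prod_univ_succ, Fin.consEquiv]

end PiProduct

lemma Function.Periodic.sum_Ico_eq_sum_range {M : Type*} [AddCommMonoid M] {f : ℤ → M} {a : ℕ}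
    (hf : Function.Periodic f a) (m : ℤ) :
    ∑ k ∈ Finset.Ico m (m + a), f k = ∑ j ∈ Finset.range a, f j := by
  have hmod : ∀ k, f (k % a) = f k := fun k => by
    conv_rhs => rw [← Int.emod_add_mul_ediv k a, mul_comm]
    exact ((hf.int_mul (k / a)) (k % a)).symm
  have hinj : Set.InjOn (· % (a : ℤ)) (Finset.Ico m (m + a)) := by
    rw [← Finset.card_image_iff, Int.image_Ico_emod _ _ (Nat.cast_nonneg a)]
    simp
  calc ∑ k ∈ Finset.Ico m (m + a), f k = ∑ k ∈ Finset.Ico m (m + a), f (k % a) := by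
        simp only [hmod]
    _ = ∑ k ∈ Finset.Ico 0 (a : ℤ), f k := by
        rw [← Int.image_Ico_emod m a (Nat.cast_nonneg a), Finset.sum_image hinj]
    _ = ∑ j ∈ Finset.range a, f j := by
        rw [Int.Ico_eq_finset_map, Finset.sum_map]
        simp

noncomputable def centeredWindow (a : ℕ) (s : ℝ) : Finset ℤ :=
  Finset.Ico ⌈-s - a / 2⌉ (⌈-s - a / 2⌉ + a)

lemma abs_add_le_of_mem_centeredWindow {a : ℕ} {s : ℝ} {k : ℤ} (hk : k ∈ centeredWindow a s) :
    |k + s| ≤ a / 2 := by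
  obtain ⟨hlo, hhi⟩ := Finset.mem_Ico.1 hk
  have hlo' : -s - a / 2 ≤ k := Int.ceil_le.1 hlo
  have hhi' : (k : ℝ) + 1 ≤ ⌈-s - a / 2⌉ + a := by exact_mod_cast hhi
  have hceil := Int.ceil_lt_add_one (-s - a / 2)
  rw [abs_le]
  constructor <;> linarith

lemma mem_centeredWindow_of_abs_add_lt {a : ℕ} {s : ℝ} {k : ℤ} (hk : |k + s| < a / 2) :
    k ∈ centeredWindow a s := by
  obtain ⟨hlo, hhi⟩ := abs_lt.1 hk
  refine Finset.mem_Ico.2 ⟨Int.ceil_le.2 (by linarith), ?_⟩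
  have hceil := Int.le_ceil (-s - a / 2)
  exact_mod_cast (show (k : ℝ) < ⌈-s - a / 2⌉ + a by linarith)

lemma pos_of_mem_centeredWindow {a : ℕ} {s : ℝ} {k : ℤ} (hk : k ∈ centeredWindow a s) :
    0 < a := by
  obtain ⟨hlo, hhi⟩ := Finset.mem_Ico.1 hk
  omega

noncomputable def thetaTerm (a : ℕ) (s τ : ℝ) (k : ℤ) : ℝ :=
  exp (-4 * τ * sin (π * (k + s) / a) ^ 2)

lemma thetaTerm_pos (a : ℕ) (s τ : ℝ) (k : ℤ) : 0 < thetaTerm a s τ k := exp_pos _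

lemma thetaTerm_periodic (a : ℕ) (s τ : ℝ) : Function.Periodic (thetaTerm a s τ) a := by
  intro k
  rcases eq_or_ne a 0 with rfl | ha
  · simp
  have harg : π * (((k + a : ℤ) : ℝ) + s) / a = π * (k + s) / a + π := by
    push_cast
    field_simp
    ring
  simp only [thetaTerm, harg, sin_add_pi, neg_sq]

lemma thetaTerm_le_of_mem_centeredWindow {a : ℕ} {s τ β : ℝ} {k : ℤ} (hτ : 0 ≤ τ)
    (haβ : a ≤ β) (hk : k ∈ centeredWindow a s) :
    thetaTerm a s τ k ≤ exp (-(16 * τ / β ^ 2) * (k + s) ^ 2) := by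
  have ha : (0 : ℝ) < a := by exact_mod_cast pos_of_mem_centeredWindow hk
  have hy : |(k + s) / a| ≤ 1 / 2 := by
    rw [abs_div, Nat.abs_cast, div_le_iff₀ ha]
    linarith [abs_add_le_of_mem_centeredWindow hk]
  have hjordan := four_mul_sq_le_sin_pi_mul_sq hy
  have hβ : 4 * (k + s) ^ 2 / β ^ 2 ≤ 4 * ((k + s) / a) ^ 2 := by
    rw [div_pow, ← mul_div_assoc]
    gcongr
  rw [thetaTerm, exp_le_exp, mul_div_assoc]
  calc -4 * τ * sin (π * ((k + s) / a)) ^ 2 ≤ -4 * τ * (4 * (k + s) ^ 2 / β ^ 2) :=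
        mul_le_mul_of_nonpos_left (hβ.trans hjordan) (by linarith)
    _ = -(16 * τ / β ^ 2) * (k + s) ^ 2 := by ring

noncomputable def cycleTheta (a : ℕ) (s τ : ℝ) : ℝ :=
  ∑ j ∈ Finset.range a, exp (-4 * τ * sin (π * (j + s) / a) ^ 2)

lemma cycleTheta_eq_tsum_indicator (a : ℕ) (s τ : ℝ) :
    cycleTheta a s τ = ∑' k : ℤ, (centeredWindow a s : Set ℤ).indicator (thetaTerm a s τ) k := by
  rw [tsum_eq_sum (s := centeredWindow a s) fun k hk => Set.indicator_of_notMem hk _,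
    Finset.sum_congr rfl fun k hk => Set.indicator_of_mem hk _, centeredWindow,
    (thetaTerm_periodic a s τ).sum_Ico_eq_sum_range]
  simp [cycleTheta, thetaTerm]

noncomputable def circleTheta (α Λ t : ℝ) : ℝ :=
  ∑' k : ℤ, exp (-4 * π ^ 2 * t * ((k + Λ) / α) ^ 2)

lemma summable_circleTheta {α t : ℝ} (hα : α ≠ 0) (ht : 0 < t) (Λ : ℝ) :
    Summable fun k : ℤ => exp (-4 * π ^ 2 * t * ((k + Λ) / α) ^ 2) :=
  (summable_exp_neg_mul_int_add_sq (c := 4 * π ^ 2 * t / α ^ 2) (by positivity) Λ).congr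
    fun k => by ring_nf

lemma tendsto_thetaTerm {a : ℕ → ℕ} {s : ℕ → ℝ} {α Λ : ℝ}
    (ha : Tendsto (fun n => (a n : ℝ)) atTop atTop)
    (hna : Tendsto (fun n : ℕ => (n : ℝ) / a n) atTop (𝓝 α⁻¹)) (hs : Tendsto s atTop (𝓝 Λ))
    (t : ℝ) (k : ℤ) :
    Tendsto (fun n : ℕ => thetaTerm (a n) (s n) (n ^ 2 * t) k) atTop
      (𝓝 (exp (-4 * π ^ 2 * t * ((k + Λ) / α) ^ 2))) := by
  have hnum : Tendsto (fun n => π * (k + s n)) atTop (𝓝 (π * (k + Λ))) :=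
    (hs.const_add _).const_mul π
  have hx : Tendsto (fun n => π * (k + s n) / a n) atTop (𝓝 0) := by
    simpa [div_eq_mul_inv] using hnum.mul ha.inv_tendsto_atTop
  have hnx : Tendsto (fun n : ℕ => n * (π * (k + s n) / a n)) atTop (𝓝 (π * (k + Λ) * α⁻¹)) :=
    (hnum.mul hna).congr fun n => by ring
  have hlim := (((hx.mul_sin hnx).pow 2).const_mul (-4 * t)).rexp
  convert hlim using 2 with n
  · simp only [thetaTerm]
    ring_nf
  · ring_nf


lemma eventually_indicator_thetaTerm_eq {a : ℕ → ℕ} {s : ℕ → ℝ} {Λ : ℝ}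
    (ha : Tendsto (fun n => (a n : ℝ)) atTop atTop) (hs : Tendsto s atTop (𝓝 Λ)) (τ : ℕ → ℝ)
    (k : ℤ) :
    ∀ᶠ n in atTop, (centeredWindow (a n) (s n) : Set ℤ).indicator (thetaTerm (a n) (s n) (τ n)) k
      = thetaTerm (a n) (s n) (τ n) k := by
  have hgap : Tendsto (fun n => (a n : ℝ) / 2 + -|k + s n|) atTop atTop :=
    (ha.atTop_div_const two_pos).atTop_add (hs.const_add _).abs.neg
  filter_upwards [hgap.eventually_gt_atTop 0] with n hn
  exact Set.indicator_of_mem (mem_centeredWindow_of_abs_add_lt (by linarith)) _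

lemma eventually_indicator_thetaTerm_le {a : ℕ → ℕ} {s : ℕ → ℝ} {α Λ t : ℝ} (hα : 0 < α)
    (haα : Tendsto (fun n : ℕ => (a n : ℝ) / n) atTop (𝓝 α)) (hs : Tendsto s atTop (𝓝 Λ))
    (ht : 0 ≤ t) :
    ∀ᶠ n : ℕ in atTop, ∀ k : ℤ,
      ‖(centeredWindow (a n) (s n) : Set ℤ).indicator (thetaTerm (a n) (s n) (n ^ 2 * t)) k‖ ≤
        exp (4 * t / α ^ 2 * (|Λ| + 1) ^ 2) * exp (-(4 * t / α ^ 2 / 2) * k ^ 2) := by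
  have ha2α : ∀ᶠ n : ℕ in atTop, (a n : ℝ) / n < 2 * α :=
    haα.eventually (gt_mem_nhds (by linarith))
  have hsΛ : ∀ᶠ n in atTop, |s n| < |Λ| + 1 := hs.abs.eventually (gt_mem_nhds (lt_add_one _))
  filter_upwards [ha2α, hsΛ, eventually_gt_atTop 0] with n han hsn hn k
  have hn' : (0 : ℝ) < n := by exact_mod_cast hn
  rw [norm_of_nonneg (Set.indicator_nonneg (fun _ _ => (thetaTerm_pos _ _ _ _).le) k)]
  by_cases hk : k ∈ centeredWindow (a n) (s n)
  · rw [Set.indicator_of_mem hk]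
    calc thetaTerm (a n) (s n) (n ^ 2 * t) k
        ≤ exp (-(16 * (n ^ 2 * t) / (2 * α * n) ^ 2) * (k + s n) ^ 2) :=
          thetaTerm_le_of_mem_centeredWindow (by positivity) ((div_lt_iff₀ hn').1 han).le hk
      _ = exp (-(4 * t / α ^ 2) * (k + s n) ^ 2) := by
          congr 1
          field_simp
          ring
      _ ≤ _ := exp_neg_mul_add_sq_le (by positivity) hsn.le k
  · rw [Set.indicator_of_notMem hk]
    positivity

theorem tendsto_cycleTheta {a : ℕ → ℕ} {s : ℕ → ℝ} {α Λ t : ℝ} (hα : 0 < α)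
    (haα : Tendsto (fun n : ℕ => (a n : ℝ) / n) atTop (𝓝 α)) (hs : Tendsto s atTop (𝓝 Λ))
    (ht : 0 < t) :
    Tendsto (fun n : ℕ => cycleTheta (a n) (s n) (n ^ 2 * t)) atTop (𝓝 (circleTheta α Λ t)) := by
  have ha : Tendsto (fun n => (a n : ℝ)) atTop atTop := by
    refine (haα.pos_mul_atTop hα tendsto_natCast_atTop_atTop).congr' ?_
    filter_upwards [eventually_ne_atTop 0] with n hn
    field_simp
  have hna : Tendsto (fun n : ℕ => (n : ℝ) / a n) atTop (𝓝 α⁻¹) :=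
    (haα.inv₀ hα.ne').congr fun n => inv_div _ _
  simp only [cycleTheta_eq_tsum_indicator]
  refine tendsto_tsum_of_dominated_convergence
    ((summable_exp_neg_mul_int_sq (by positivity)).mul_left _)
    (fun k => (tendsto_thetaTerm ha hna hs t k).congr'
      (EventuallyEq.symm (eventually_indicator_thetaTerm_eq ha hs _ k)))
    (eventually_indicator_thetaTerm_le hα haα hs ht.le)

theorem rescaled_theta_convergence_general
    (d : ℕ)
    (a : Fin d → ℕ → ℕ)
    (α : Fin d → ℝ) (hα : ∀ i, 0 < α i)
    (haα : ∀ i, Filter.Tendsto (fun n : ℕ => (a i n : ℝ) / (n : ℝ)) Filter.atTop (nhds (α i)))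
    (lam : Fin d → ℕ → ℝ)
    (Λ : Fin d → ℝ) (hΛlim : ∀ i, Filter.Tendsto (lam i) Filter.atTop (nhds (Λ i)))
    (t : ℝ) (ht : 0 < t) :
    Filter.Tendsto (fun n : ℕ =>
        ∏ i, ∑ j ∈ Finset.range (a i n),
          Real.exp (-4 * ((n : ℝ) ^ 2 * t) *
            Real.sin (π * ((j : ℝ) + lam i n) / (a i n : ℝ)) ^ 2))
      Filter.atTop
      (nhds (∑' K : Fin d → ℤ,
        Real.exp (-4 * π ^ 2 * t * ∑ i, (((K i : ℝ) + Λ i) / α i) ^ 2))) := by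
  have hsummable (i : Fin d) :
      Summable fun k : ℤ => ‖exp (-4 * π ^ 2 * t * ((k + Λ i) / α i) ^ 2)‖ :=
    (summable_circleTheta (hα i).ne' ht (Λ i)).norm
  have hlimit : ∑' K : Fin d → ℤ, exp (-4 * π ^ 2 * t * ∑ i, ((K i + Λ i) / α i) ^ 2) =
      ∏ i, circleTheta (α i) (Λ i) t := by
    simp only [circleTheta]
    rw [← tsum_prod_pi hsummable]
    exact tsum_congr fun K => by rw [Finset.mul_sum, exp_sum]
  rw [hlimit]
  exact tendsto_finsetProd _ fun i _ => tendsto_cycleTheta (hα i) (haα i) (hΛlim i) ht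

/-- The rescaled theta function of the twisted discrete torus converges to the theta
function of the twisted continuous torus: `lim_{n→∞} θ^{G_n}(n²t) = θ^∞(t)`. -/
theorem rescaled_theta_convergence
    (d : ℕ) (hd : 1 ≤ d)
    (a : Fin d → ℕ → ℕ) (ha : ∀ i n, 0 < a i n)
    (α : Fin d → ℝ) (hα : ∀ i, 0 < α i)
    (haα : ∀ i, Filter.Tendsto (fun n : ℕ => (a i n : ℝ) / (n : ℝ)) Filter.atTop (nhds (α i)))
    (lam : Fin d → ℕ → ℝ) (hlam : ∀ i n, lam i n ∈ Set.Ico (0 : ℝ) 1)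
    (Λ : Fin d → ℝ) (hΛlim : ∀ i, Filter.Tendsto (lam i) Filter.atTop (nhds (Λ i)))
    (hΛ : ∀ i, Λ i ∈ Set.Icc (0 : ℝ) 1)
    (h0 : ∃ i, Λ i ≠ 0 ∧ Λ i ≠ 1)
    (t : ℝ) (ht : 0 < t) :
    Filter.Tendsto (fun n : ℕ =>
        ∏ i, ∑ j ∈ Finset.range (a i n),
          Real.exp (-4 * ((n : ℝ) ^ 2 * t) *
            Real.sin (π * ((j : ℝ) + lam i n) / (a i n : ℝ)) ^ 2))
      Filter.atTop
      (nhds (∑' K : Fin d → ℤ,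
        Real.exp (-4 * π ^ 2 * t * ∑ i, (((K i : ℝ) + Λ i) / α i) ^ 2))) :=
  rescaled_theta_convergence_general d a α hα haα lam Λ hΛlim t ht
end

section
/- (Product formula for determinants of bundle Laplacians on discrete tori.) For all positive integers m_1,…,m_d and n: ∏_{0≤j_1≤m_1n−1} … ∏_{0≤j_d≤m_dn−1} ( ∑_{i=1}^d 4 sin²( π(j_i+λ_i)/(m_i n) ) ) = ∏_{0≤k_1≤m_1−1} … ∏_{0≤k_d≤m_d−1} ∏_{0≤j_1≤n−1} … ∏_{0≤j_d≤n−1} ( ∑_{i=1}^d 4 sin²( π( j_i + (k_i+λ_i)/m_i )/n ) ). Equivalently, F_{(m_1n,…,m_dn)}(z_1,…,z_d) = ∏_{u_1^{m_1}=z_1} ⋯ ∏_{u_d^{m_d}=z_d} F_{(n,…,n)}(u_1,…,u_d), where F denotes the determinant of the bundle Laplacian with monodromies z_i = e^{2πiλ_i}. -/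
open Real Filter MeasureTheory

/-- Splitting a pi type of products into a product of pi types. -/
def piProdSplitEquiv {ι : Type*} {α β : ι → Type*} :
    (∀ i, α i × β i) ≃ (∀ i, α i) × (∀ i, β i) :=
  ⟨fun f => (fun i => (f i).1, fun i => (f i).2), fun p i => (p.1 i, p.2 i),
    fun _ => rfl, fun _ => rfl⟩

/-- Product formula for determinants of bundle Laplacians on twisted discrete tori:
`F_{(m₁n,…,m_dn)}(z₁,…,z_d) = ∏_{u₁^{m₁}=z₁} ⋯ ∏_{u_d^{m_d}=z_d} F_{(n,…,n)}(u₁,…,u_d)`. -/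
theorem bundle_determinant_product_formula
    (d : ℕ) (hd : 1 ≤ d)
    (lam : Fin d → ℝ) (hlam : ∀ i, lam i ∈ Set.Ico (0 : ℝ) 1)
    (h0 : ∃ i, lam i ∈ Set.Ioo (0 : ℝ) 1)
    (m : Fin d → ℕ) (hm : ∀ i, 0 < m i) (n : ℕ) (hn : 0 < n) :
    (∏ j : (∀ i : Fin d, Fin (m i * n)),
        ∑ i, 4 * Real.sin (π * (((j i : ℕ) : ℝ) + lam i) / ((m i : ℝ) * (n : ℝ))) ^ 2) =
      ∏ k : (∀ i : Fin d, Fin (m i)), ∏ j : (∀ i : Fin d, Fin n),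
        ∑ i, 4 * Real.sin
          (π * (((j i : ℕ) : ℝ) + (((k i : ℕ) : ℝ) + lam i) / (m i : ℝ)) / (n : ℝ)) ^ 2 := by
  set g : ((∀ i : Fin d, Fin (m i)) × (∀ i : Fin d, Fin n)) → ℝ := fun p =>
    ∑ i, 4 * Real.sin
      (π * (((p.2 i : ℕ) : ℝ) + (((p.1 i : ℕ) : ℝ) + lam i) / (m i : ℝ)) / (n : ℝ)) ^ 2 with hg
  have key : (∏ p : ((∀ i : Fin d, Fin (m i)) × (∀ i : Fin d, Fin n)), g p) =
      ∏ k : (∀ i : Fin d, Fin (m i)), ∏ j : (∀ i : Fin d, Fin n), g (k, j) :=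
    Fintype.prod_prod_type g
  rw [show (∏ k : (∀ i : Fin d, Fin (m i)), ∏ j : (∀ i : Fin d, Fin n),
      ∑ i, 4 * Real.sin
        (π * (((j i : ℕ) : ℝ) + (((k i : ℕ) : ℝ) + lam i) / (m i : ℝ)) / (n : ℝ)) ^ 2) =
      ∏ p : ((∀ i : Fin d, Fin (m i)) × (∀ i : Fin d, Fin n)), g p from key.symm]
  -- equivalence Fin (m i * n) ≃ Fin n × Fin (m i) : x ↦ (x / m i, x % m i)
  let E : (∀ i : Fin d, Fin (m i * n)) ≃ ((∀ i : Fin d, Fin (m i)) × (∀ i : Fin d, Fin n)) :=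
    ((Equiv.piCongrRight fun i =>
        ((finCongr (mul_comm (m i) n)).trans finProdFinEquiv.symm).trans
          (Equiv.prodComm _ _)).trans piProdSplitEquiv)
  refine Fintype.prod_equiv E _ _ fun x => ?_
  refine Finset.sum_congr rfl fun i _ => ?_
  have hE1 : (((E x).1 i : ℕ) : ℝ) = ((x i : ℕ) % m i : ℕ) := by
    simp [E, piProdSplitEquiv, Fin.modNat]
  have hE2 : (((E x).2 i : ℕ) : ℝ) = ((x i : ℕ) / m i : ℕ) := by
    simp [E, piProdSplitEquiv, Fin.divNat]
  have hx : (m i : ℝ) * ((x i : ℕ) / m i : ℕ) + ((x i : ℕ) % m i : ℕ) = ((x i : ℕ) : ℝ) := by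
    exact_mod_cast congrArg (Nat.cast : ℕ → ℝ) (Nat.div_add_mod (x i : ℕ) (m i))
  have hm' : (m i : ℝ) ≠ 0 := Nat.cast_ne_zero.mpr (hm i).ne'
  have hn' : (n : ℝ) ≠ 0 := Nat.cast_ne_zero.mpr hn.ne'
  rw [hE1, hE2]
  congr 2
  rw [← hx]
  field_simp
  ring_nf
end
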